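/- No balanced complete a-partite graph with a ≥ 2 parts each of size b ≥ 2, other than K_{2,2}, admits a time t with P_t(j) = 1/(ab) for all vertices j, where P_t is the continuous-time quantum walk probability distribution started at a vertex. -/

import Mathlib

open Matrix Complex Kronecker

section Aux

open NormedSpace

/-- exp of a scalar multiple of an idempotent matrix. -/
theorem qwAux_exp_smul_idem {n : Type*} [Fintype n] [DecidableEq n]
    (P : Matrix n n ℂ) (hP : P * P = P) (c : ℂ) :
    exp (c • P) = 1 + (Complex.exp c - 1) • P := by
  letI : SeminormedRing (Matrix n n ℂ) := Matrix.linftyOpSemiNormedRing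
  letI : NormedRing (Matrix n n ℂ) := Matrix.linftyOpNormedRing
  letI : NormedAlgebra ℂ (Matrix n n ℂ) := Matrix.linftyOpNormedAlgebra
  have hP' : P * (1 - P) = 0 := by rw [mul_sub, mul_one, hP, sub_self]
  have hP'' : (1 - P) * P = 0 := by rw [sub_mul, one_mul, hP, sub_self]
  have hP''' : (1 - P) * (1 - P) = 1 - P := by
    rw [sub_mul, one_mul, mul_sub, mul_one, hP]; simp
  let f : ℂ × ℂ →+* Matrix n n ℂ :=
    { toFun := fun z => z.1 • P + z.2 • (1 - P)
      map_one' := by simp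
      map_mul' := by
        intro x y
        show _ = (_ • _ + _ • _) * (_ • _ + _ • _)
        simp only [add_mul, mul_add, smul_mul_assoc, mul_smul_comm, hP, hP', hP'', hP''',
          smul_zero, smul_smul, add_zero, zero_add, Prod.fst_mul, Prod.snd_mul]
        module
      map_zero' := by simp
      map_add' := by
        intro x y
        simp only [Prod.fst_add, Prod.snd_add, add_smul]
        abel }
  have hf : Continuous f := by
    show Continuous fun z : ℂ × ℂ => z.1 • P + z.2 • (1 - P)
    fun_prop
  have h1 : c • P = f (c, 0) := by show c • P = (c, (0:ℂ)).1 • P + (c, (0:ℂ)).2 • (1 - P); simp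
  rw [h1]; erw [← map_exp f hf]
  have h2 : exp ((c, 0) : ℂ × ℂ) = (Complex.exp c, 1) := by
    ext
    · rw [Prod.fst_exp, Complex.exp_eq_exp_ℂ]
    · rw [Prod.snd_exp]; exact exp_zero
  rw [h2]
  show Complex.exp c • P + (1:ℂ) • (1 - P) = 1 + (Complex.exp c - 1) • P
  module

/-- exp of a combination of two orthogonal idempotent matrices. -/
theorem qwAux_exp_two_idem {n : Type*} [Fintype n] [DecidableEq n]
    (P Q : Matrix n n ℂ) (hP : P * P = P) (hQ : Q * Q = Q)
    (hPQ : P * Q = 0) (hQP : Q * P = 0) (c d : ℂ) :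
    exp (c • P + d • Q) =
      1 + (Complex.exp c - 1) • P + (Complex.exp d - 1) • Q := by
  have hcomm : Commute (c • P) (d • Q) := by
    unfold Commute SemiconjBy
    rw [smul_mul_smul_comm, smul_mul_smul_comm, hPQ, hQP, smul_zero, smul_zero]
  rw [Matrix.exp_add_of_commute _ _ hcomm, qwAux_exp_smul_idem P hP c,
    qwAux_exp_smul_idem Q hQ d]
  rw [add_mul, mul_add, mul_add, one_mul, mul_one, smul_mul_smul_comm, hPQ, smul_zero]
  simp only [one_mul]
  abel

variable (a b : ℕ)

noncomputable def qwP1 : Matrix (Fin a × Fin b) (Fin a × Fin b) ℂ :=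
  Matrix.of fun _ _ => ((a : ℂ) * b)⁻¹

noncomputable def qwN : Matrix (Fin a × Fin b) (Fin a × Fin b) ℂ :=
  Matrix.of fun p q => if p.1 = q.1 then (b : ℂ)⁻¹ else 0

theorem qwP1_idem (ha : (a : ℂ) ≠ 0) (hb : (b : ℂ) ≠ 0) :
    qwP1 a b * qwP1 a b = qwP1 a b := by
  ext p q
  simp only [qwP1, mul_apply, of_apply, Fintype.sum_prod_type, Finset.sum_const,
    Finset.card_univ, Fintype.card_prod, Fintype.card_fin, nsmul_eq_mul, Nat.cast_mul]
  field_simp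

theorem qwN_idem (hb : (b : ℂ) ≠ 0) : qwN a b * qwN a b = qwN a b := by
  ext p q
  simp only [qwN, mul_apply, of_apply, Fintype.sum_prod_type, ite_mul, zero_mul,
    mul_ite, mul_zero, Finset.sum_const, Finset.card_univ, Fintype.card_fin, nsmul_eq_mul,
    Finset.sum_ite_eq, Finset.mem_univ, if_true]
  by_cases h : p.1 = q.1 <;> simp [h] <;> field_simp

theorem qwN_mul_P1 (ha : (a : ℂ) ≠ 0) (hb : (b : ℂ) ≠ 0) :
    qwN a b * qwP1 a b = qwP1 a b := by
  ext p q
  simp only [qwN, qwP1, mul_apply, of_apply, Fintype.sum_prod_type, ite_mul, zero_mul,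
    Finset.sum_const, Finset.card_univ, Fintype.card_fin, nsmul_eq_mul,
    Finset.sum_ite_eq, Finset.mem_univ, if_true]
  simp [Finset.sum_ite_eq, Finset.sum_ite_eq']
  field_simp

theorem qwP1_mul_N (ha : (a : ℂ) ≠ 0) (hb : (b : ℂ) ≠ 0) :
    qwP1 a b * qwN a b = qwP1 a b := by
  ext p q
  simp only [qwN, qwP1, mul_apply, of_apply, Fintype.sum_prod_type, mul_ite, mul_zero,
    Finset.sum_const, Finset.card_univ, Fintype.card_fin, nsmul_eq_mul,
    Finset.sum_ite_eq', Finset.mem_univ, if_true]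
  simp [Finset.sum_ite_eq, Finset.sum_ite_eq']
  field_simp

theorem qwH_decomp (ha : (a : ℂ) ≠ 0) (hb : (b : ℂ) ≠ 0) (ha1 : (a : ℂ) - 1 ≠ 0) :
    ((((a : ℂ) - 1)⁻¹ • ((Matrix.of fun _ _ => (1 : ℂ)) - 1)) ⊗ₖ
        ((b : ℂ)⁻¹ • (Matrix.of fun _ _ => (1 : ℂ))) :
      Matrix (Fin a × Fin b) (Fin a × Fin b) ℂ) =
    qwP1 a b + (-(((a : ℂ) - 1)⁻¹)) • (qwN a b - qwP1 a b) := by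
  ext p q
  simp only [qwP1, qwN, kroneckerMap_apply, Matrix.smul_apply, Matrix.sub_apply, of_apply,
    Matrix.one_apply, Matrix.add_apply, smul_eq_mul, Prod.mk.injEq]
  by_cases h : p.1 = q.1 <;> simp only [h, if_true, if_false] <;> field_simp <;> ring

end Aux

/-- No balanced complete `a`-partite graph with `a ≥ 2` parts each of size `b ≥ 2`,
other than `K_{2,2}`, admits a time `t` at which the continuous-time quantum walk
started at a vertex is uniformly distributed: `P_t(j) = 1/(ab)` for all vertices `j`. -/
theorem multipartite_no_uniform_mixing (a b : ℕ) (ha : 2 ≤ a) (hb : 2 ≤ b)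
    (hne : ¬(a = 2 ∧ b = 2))
    (H : Matrix (Fin a × Fin b) (Fin a × Fin b) ℂ)
    (hH : H = (((a : ℂ) - 1)⁻¹ • ((Matrix.of fun _ _ => (1 : ℂ)) - 1)) ⊗ₖ
        ((b : ℂ)⁻¹ • (Matrix.of fun _ _ => (1 : ℂ)))) :
    ¬ ∃ t : ℝ, ∀ j : Fin a × Fin b,
      ‖(NormedSpace.exp ((-(t : ℂ) * Complex.I) • H)).mulVec
        (fun k : Fin a × Fin b =>
          if k = ((⟨0, by omega⟩ : Fin a), (⟨0, by omega⟩ : Fin b)) then 1 else 0) j‖ ^ 2 =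
      1 / ((a : ℝ) * b) := by
  rintro ⟨t, ht⟩
  have haC : (a : ℂ) ≠ 0 := Nat.cast_ne_zero.2 (by omega)
  have hbC : (b : ℂ) ≠ 0 := Nat.cast_ne_zero.2 (by omega)
  have ha1 : (a : ℂ) - 1 ≠ 0 := by
    intro h
    have : (a : ℂ) = 1 := by linear_combination h
    have : a = 1 := by exact_mod_cast this
    omega
  set c₁ : ℂ := -(t : ℂ) * Complex.I with hc₁
  set c₂ : ℂ := (-(t : ℂ) * Complex.I) * (-(((a : ℂ) - 1)⁻¹)) with hc₂
  -- the decomposition of the Hamiltonian and its exponential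
  have hsmul : (-(t : ℂ) * Complex.I) • H =
      c₁ • qwP1 a b + c₂ • (qwN a b - qwP1 a b) := by
    rw [hH, qwH_decomp a b haC hbC ha1, smul_add, smul_smul]
  have hQidem : (qwN a b - qwP1 a b) * (qwN a b - qwP1 a b) = qwN a b - qwP1 a b := by
    rw [sub_mul, mul_sub, mul_sub, qwN_idem a b hbC, qwN_mul_P1 a b haC hbC,
      qwP1_mul_N a b haC hbC, qwP1_idem a b haC hbC]
    abel
  have hPQ : qwP1 a b * (qwN a b - qwP1 a b) = 0 := by
    rw [mul_sub, qwP1_mul_N a b haC hbC, qwP1_idem a b haC hbC, sub_self]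
  have hQP : (qwN a b - qwP1 a b) * qwP1 a b = 0 := by
    rw [sub_mul, qwN_mul_P1 a b haC hbC, qwP1_idem a b haC hbC, sub_self]
  have hexp : NormedSpace.exp ((-(t : ℂ) * Complex.I) • H) =
      1 + (Complex.exp c₁ - 1) • qwP1 a b +
        (Complex.exp c₂ - 1) • (qwN a b - qwP1 a b) := by
    rw [hsmul]
    exact qwAux_exp_two_idem _ _ (qwP1_idem a b haC hbC) hQidem hPQ hQP c₁ c₂
  -- evaluate the amplitude at vertex (1, 0)
  set j₁ : Fin a × Fin b := (⟨1, by omega⟩, ⟨0, by omega⟩) with hj₁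
  set z₀ : Fin a × Fin b := (⟨0, by omega⟩, ⟨0, by omega⟩) with hz₀
  have hamp : (NormedSpace.exp ((-(t : ℂ) * Complex.I) • H)).mulVec
      (fun k : Fin a × Fin b => if k = z₀ then 1 else 0) j₁ =
      (Complex.exp c₁ - Complex.exp c₂) * ((a : ℂ) * b)⁻¹ := by
    rw [hexp]
    have hne10 : j₁ ≠ z₀ := by
      simp [hj₁, hz₀, Prod.ext_iff, Fin.ext_iff]
    have hne10' : (⟨1, by omega⟩ : Fin a) ≠ (⟨0, by omega⟩ : Fin a) := by
      simp [Fin.ext_iff]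
    simp only [mulVec, dotProduct, mul_ite, mul_one, mul_zero, Finset.sum_ite_eq',
      Finset.mem_univ, if_true]
    simp only [Matrix.add_apply, Matrix.smul_apply, Matrix.sub_apply, Matrix.one_apply,
      qwP1, qwN, of_apply, hne10, if_false, smul_eq_mul, hj₁, hz₀, hne10']
    rw [if_neg (by simp [Prod.ext_iff, Fin.ext_iff])]
    ring
  have hval := ht j₁
  rw [hamp] at hval
  -- bound the modulus
  have habs1 : ‖Complex.exp c₁‖ = 1 := by
    rw [Complex.norm_exp]
    simp [hc₁]
  have habs2 : ‖Complex.exp c₂‖ = 1 := by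
    have hc2' : c₂ = ((t * ((a : ℝ) - 1)⁻¹ : ℝ) : ℂ) * Complex.I := by
      rw [hc₂]
      push_cast
      ring
    rw [hc2', Complex.norm_exp]
    simp [Complex.mul_re]
  have habm : ‖((a : ℂ) * b)⁻¹‖ = (((a : ℝ) * b)⁻¹) := by
    rw [norm_inv, show ((a : ℂ) * b) = ((a * b : ℕ) : ℂ) by push_cast; ring,
      Complex.norm_natCast]
    push_cast
    ring
  -- the modulus bound
  set A : ℝ := ‖Complex.exp c₁ - Complex.exp c₂‖ with hA
  have hA2 : A ≤ 2 := by
    have h := norm_add_le (Complex.exp c₁) (-Complex.exp c₂)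
    rw [norm_neg, ← sub_eq_add_neg, habs1, habs2] at h
    linarith
  have hA0 : 0 ≤ A := norm_nonneg _
  rw [norm_mul, habm] at hval
  have hrpos : (0 : ℝ) < (a : ℝ) * b := by positivity
  have hval' : A ^ 2 = (a : ℝ) * b := by
    rw [mul_pow] at hval
    field_simp at hval
    nlinarith [hval, hrpos]
  have hab6 : (6 : ℝ) ≤ (a : ℝ) * b := by
    have : 6 ≤ a * b := by
      have h3 : 3 ≤ a ∨ 3 ≤ b := by omega
      rcases h3 with h3 | h3
      · calc 6 = 3 * 2 := rfl
          _ ≤ a * b := Nat.mul_le_mul h3 hb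
      · calc 6 = 2 * 3 := rfl
          _ ≤ a * b := Nat.mul_le_mul ha h3
    exact_mod_cast this
  nlinarith [hval', hA2, hA0, hab6]
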